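/- arXiv:2202.07788 — 4 statements merged into one kernel-verified Lean document; each statement's English description precedes it below -/
import Mathlib

section
/- If (π, V) is a finite-dimensional complex representation of a finite group G admitting a nondegenerate G-invariant symmetric bilinear form, then there exists a real representation (π₀, V₀) of G with π₀ ⊗_ℝ ℂ ≅ π. -/
/-!
Averaging over `G` gives a `G`-invariant Hermitian inner product on `V`. Through it, the
bilinear form becomes a conjugate-linear `G`-equivariant map `J` with `B v w = ⟪J v, w⟫`, and
`P = J²` is positive definite because `⟪P v, v⟫ = ‖J v‖²` and `B` is nondegenerate. Since
`P^(-1/2)` is a polynomial in `P` with real coefficients, it commutes with `J` and with `G`, so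
`σ = J P^(-1/2)` is a `G`-equivariant conjugate-linear involution. Taking `σ` as a star operation,
`V` is the complexification of its self-adjoint part, which is a real form of the representation.
-/

open TensorProduct ComplexStarModule Polynomial
open scoped InnerProductSpace

section InvariantInnerProduct

variable {𝕜 : Type*} [RCLike 𝕜] {G : Type*} {V : Type*} [AddCommGroup V] [Module 𝕜 V]

noncomputable abbrev Representation.averagedInnerCore {E : Type*} [NormedAddCommGroup E]
    [InnerProductSpace 𝕜 E] [Monoid G] [Fintype G] (π : Representation 𝕜 G V) (f : V →ₗ[𝕜] E)
    (hf : Function.Injective f) : InnerProductSpace.Core 𝕜 V where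
  inner v w := ∑ g, ⟪f (π g v), f (π g w)⟫_𝕜
  conj_inner_symm v w := by simp [inner_conj_symm]
  re_inner_nonneg v := by
    simp only [map_sum]
    exact Finset.sum_nonneg fun g _ => inner_self_nonneg
  add_left u v w := by simp [inner_add_left, Finset.sum_add_distrib]
  smul_left u v r := by simp [inner_smul_left, Finset.mul_sum]
  definite v hv := by
    have hsum : ∑ g, ‖f (π g v)‖ ^ 2 = 0 := by
      have : ((∑ g, ‖f (π g v)‖ ^ 2 : ℝ) : 𝕜) = 0 := by
        push_cast
        simpa [inner_self_eq_norm_sq_to_K] using hv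
      exact_mod_cast this
    have := (Finset.sum_eq_zero_iff_of_nonneg fun g _ => sq_nonneg ‖f (π g v)‖).1 hsum 1
      (Finset.mem_univ 1)
    exact (map_eq_zero_iff f hf).1 (by simpa using this)

theorem Representation.averagedInnerCore_invariant {E : Type*} [NormedAddCommGroup E]
    [InnerProductSpace 𝕜 E] [Group G] [Fintype G] (π : Representation 𝕜 G V) (f : V →ₗ[𝕜] E)
    (hf : Function.Injective f) (h : G) (v w : V) :
    (π.averagedInnerCore f hf).inner (π h v) (π h w) = (π.averagedInnerCore f hf).inner v w :=
  Fintype.sum_equiv (Equiv.mulRight h) _ _ fun g => by simp [map_mul]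

theorem Representation.exists_invariant_innerProductCore [Group G] [Finite G]
    [FiniteDimensional 𝕜 V] (π : Representation 𝕜 G V) :
    ∃ c : InnerProductSpace.Core 𝕜 V, ∀ g v w, c.inner (π g v) (π g w) = c.inner v w := by
  have := Fintype.ofFinite G
  let f := (Module.finBasis 𝕜 V).equivFun.trans (WithLp.linearEquiv 2 𝕜 (Fin _ → 𝕜)).symm
  exact ⟨π.averagedInnerCore f.toLinearMap f.injective, π.averagedInnerCore_invariant _ _⟩

end InvariantInnerProduct

theorem conjLinear_aeval_comm {V : Type*} [AddCommGroup V] [Module ℂ V] {J : V →ₗ⋆[ℂ] V}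
    {T : Module.End ℂ V} (hJT : ∀ v, J (T v) = T (J v)) (q : ℝ[X]) (v : V) :
    J (aeval T q v) = aeval T q (J v) := by
  induction q using Polynomial.induction_on generalizing v with
  | C a =>
    simp only [aeval_C, Module.algebraMap_end_apply, ← Complex.coe_smul, map_smulₛₗ,
      Complex.conj_ofReal]
  | add p q hp hq => simp only [map_add, LinearMap.add_apply, hp, hq]
  | monomial n a ih =>
    rw [pow_succ, ← mul_assoc, map_mul, aeval_X, Module.End.mul_apply, Module.End.mul_apply, ih,
      hJT]

section ConjLinearInvolution

variable {V : Type*} [NormedAddCommGroup V] [InnerProductSpace ℂ V] [FiniteDimensional ℂ V]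

theorem LinearMap.IsSymmetric.exists_polynomial_inv_sqrt {T : Module.End ℂ V}
    (hT : T.IsSymmetric) (hpos : ∀ v, v ≠ 0 → 0 < (⟪T v, v⟫_ℂ).re) :
    ∃ q : ℝ[X], T * aeval T q * aeval T q = 1 := by
  let b := hT.eigenvectorBasis rfl
  let μ := hT.eigenvalues rfl
  have hb : ∀ i, T (b i) = (μ i : ℂ) • b i := hT.apply_eigenvectorBasis rfl
  have hμ : ∀ i, 0 < μ i := fun i => by
    simpa [hb, inner_smul_left, inner_self_eq_norm_sq_to_K] using
      hpos (b i) (b.orthonormal.ne_zero i)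
  let q : ℝ[X] := Lagrange.interpolate (Finset.univ.image μ) _root_.id (fun t => (√t)⁻¹)
  have hq : ∀ i, q.eval (μ i) = (√(μ i))⁻¹ := fun i =>
    Lagrange.eval_interpolate_at_node _ (Set.injOn_id _)
      (Finset.mem_image_of_mem μ (Finset.mem_univ i))
  have hqb : ∀ i, aeval T q (b i) = (√(μ i))⁻¹ • b i := fun i => by
    rw [← aeval_map_algebraMap ℂ, Module.End.aeval_apply_of_hasEigenvector
      (hT.hasEigenvector_eigenvectorBasis rfl i), eval_map_algebraMap, aeval_algebraMap_apply,
      coe_aeval_eq_eval, hq, algebraMap_smul]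
  refine ⟨q, b.toBasis.ext fun i => ?_⟩
  have hsqrt : (√(μ i))⁻¹ * ((√(μ i))⁻¹ * μ i) = 1 := by
    rw [← mul_assoc, ← mul_inv, Real.mul_self_sqrt (hμ i).le, inv_mul_cancel₀ (hμ i).ne']
  simp only [OrthonormalBasis.coe_toBasis, Module.End.mul_apply, Module.End.one_apply, hqb,
    map_smul_of_tower, hb, Complex.coe_smul, smul_smul, hsqrt, one_smul]

namespace InnerProductSpace

noncomputable def conjLinearOfBilin (B : V →ₗ[ℂ] V →ₗ[ℂ] ℂ) : V →ₗ⋆[ℂ] V :=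
  (toDual ℂ V).symm.toLinearEquiv.toLinearMap ∘ₛₗ
    (LinearMap.toContinuousLinearMap.toLinearMap ∘ₗ B)

variable {B : V →ₗ[ℂ] V →ₗ[ℂ] ℂ}

@[simp]
theorem inner_conjLinearOfBilin (v w : V) : ⟪conjLinearOfBilin B v, w⟫_ℂ = B v w :=
  toDual_symm_apply

theorem conjLinearOfBilin_equivariant {G : Type*} [Group G] (π : Representation ℂ G V)
    (hπ : ∀ g v w, ⟪π g v, π g w⟫_ℂ = ⟪v, w⟫_ℂ) (hB : ∀ g v w, B (π g v) (π g w) = B v w)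
    (g : G) (v : V) : conjLinearOfBilin B (π g v) = π g (conjLinearOfBilin B v) := by
  refine ext_inner_right ℂ fun w => ?_
  rw [← π.self_inv_apply g w, hπ, inner_conjLinearOfBilin, inner_conjLinearOfBilin, hB]

theorem inner_conjLinearOfBilin_comp_self (hB : ∀ v w, B v w = B w v) (v w : V) :
    ⟪(conjLinearOfBilin B ∘ₛₗ conjLinearOfBilin B) v, w⟫_ℂ =
      ⟪conjLinearOfBilin B w, conjLinearOfBilin B v⟫_ℂ := by
  simp [hB]

end InnerProductSpace

open InnerProductSpace in
theorem Representation.exists_equivariant_conjLinear_involution {G : Type*} [Group G]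
    (π : Representation ℂ G V) (hπ : ∀ g v w, ⟪π g v, π g w⟫_ℂ = ⟪v, w⟫_ℂ)
    (B : V →ₗ[ℂ] V →ₗ[ℂ] ℂ) (hsymm : ∀ v w, B v w = B w v)
    (hinv : ∀ g v w, B (π g v) (π g w) = B v w) (hnondeg : ∀ v, (∀ w, B v w = 0) → v = 0) :
    ∃ σ : V →ₗ⋆[ℂ] V, (∀ v, σ (σ v) = v) ∧ ∀ g v, σ (π g v) = π g (σ v) := by
  let J := conjLinearOfBilin B
  let P : Module.End ℂ V := J ∘ₛₗ J
  have hJπ : ∀ g v, J (π g v) = π g (J v) := conjLinearOfBilin_equivariant π hπ hinv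
  have hP : ∀ v w, ⟪P v, w⟫_ℂ = ⟪J w, J v⟫_ℂ := inner_conjLinearOfBilin_comp_self hsymm
  have hPsymm : P.IsSymmetric := fun v w => by rw [hP, ← inner_conj_symm v, hP, inner_conj_symm]
  have hJinj : ∀ v, J v = 0 → v = 0 := fun v hv =>
    hnondeg v fun w => by rw [← inner_conjLinearOfBilin, hv, inner_zero_left]
  have hPpos : ∀ v, v ≠ 0 → 0 < (⟪P v, v⟫_ℂ).re := fun v hv => by
    rw [hP, ← RCLike.re_to_complex, inner_self_eq_norm_sq]
    exact pow_pos (norm_pos_iff.2 (mt (hJinj v) hv)) 2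
  obtain ⟨q, hq⟩ := hPsymm.exists_polynomial_inv_sqrt hPpos
  have hJS : ∀ v, J (aeval P q v) = aeval P q (J v) := conjLinear_aeval_comm (fun _ => rfl) q
  have hπS : ∀ g, Commute (π g) (aeval P q) := fun g =>
    Algebra.commute_of_mem_adjoin_singleton_of_commute (aeval_mem_adjoin_singleton ℝ P) <|
      LinearMap.ext fun v => by simp [P, hJπ]
  refine ⟨J ∘ₛₗ aeval P q, fun v => ?_, fun g v => ?_⟩
  · rw [LinearMap.comp_apply, LinearMap.comp_apply, ← hJS]
    exact congr($hq v)
  · rw [LinearMap.comp_apply, LinearMap.comp_apply, ← hJπ, ← Module.End.mul_apply,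
      ← (hπS g).eq]
    rfl

end ConjLinearInvolution

section RealForm

variable {G : Type*} [Monoid G]

def Representation.HasRealForm {V : Type*} [AddCommGroup V] [Module ℂ V]
    (π : Representation ℂ G V) : Prop :=
  ∃ (V₀ : Type) (_ : AddCommGroup V₀) (_ : Module ℝ V₀) (π₀ : Representation ℝ G V₀)
    (e : (ℂ ⊗[ℝ] V₀) ≃ₗ[ℂ] V), ∀ g x, e (LinearMap.baseChange ℂ (π₀ g) x) = π g (e x)

theorem Representation.HasRealForm.of_equiv {V : Type*} [AddCommGroup V] [Module ℂ V]
    {π : Representation ℂ G V} {V₁ : Type*} [AddCommGroup V₁] [Module ℝ V₁] [Module.Finite ℝ V₁]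
    (π₁ : Representation ℝ G V₁) (e₁ : (ℂ ⊗[ℝ] V₁) ≃ₗ[ℂ] V)
    (he₁ : ∀ g x, e₁ (LinearMap.baseChange ℂ (π₁ g) x) = π g (e₁ x)) :
    π.HasRealForm := by
  let ε := (Module.finBasis ℝ V₁).equivFun
  refine ⟨_, _, _, ε.conjRingEquiv.toMonoidHom.comp π₁, (ε.baseChange ℝ ℂ _ _).symm ≪≫ₗ e₁,
    fun g x => ?_⟩
  induction x with
  | zero => simp
  | add x y hx hy => simp_all
  | tmul a w => simp [← he₁]

variable {V : Type*} [AddCommGroup V] [Module ℂ V] [StarAddMonoid V] [StarModule ℂ V]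

def selfAdjoint.subtypeₗ : selfAdjoint V →ₗ[ℝ] V where
  toFun := Subtype.val
  map_add' _ _ := rfl
  map_smul' _ _ := rfl

theorem bijective_liftBaseChange_selfAdjoint_subtypeₗ :
    Function.Bijective ((selfAdjoint.subtypeₗ (V := V)).liftBaseChange ℂ) := by
  refine Function.bijective_iff_has_inverse.mpr
    ⟨fun v => 1 ⊗ₜ ℜ v + Complex.I ⊗ₜ ℑ v, fun x => ?_, fun v => ?_⟩
  · induction x with
    | zero => simp
    | tmul a w =>
      simp [selfAdjoint.subtypeₗ, realPart_smul, imaginaryPart_smul, tmul_smul, smul_tmul',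
        ← add_tmul]
    | add x y hx hy =>
      simp only [map_add, tmul_add] at hx hy ⊢
      rw [add_add_add_comm, hx, hy]
  · simp [selfAdjoint.subtypeₗ, realPart_add_I_smul_imaginaryPart]

def Representation.onSelfAdjoint (π : Representation ℂ G V)
    (hπ : ∀ g v, star (π g v) = π g (star v)) : Representation ℝ G (selfAdjoint V) where
  toFun g :=
    { toFun w := ⟨π g w, by rw [selfAdjoint.mem_iff, hπ, w.2.star_eq]⟩
      map_add' _ _ := by ext; simp
      map_smul' _ _ := by ext; simp }
  map_one' := by ext; simp
  map_mul' _ _ := by ext; simp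

theorem Representation.hasRealForm_of_star_comm [FiniteDimensional ℂ V]
    (π : Representation ℂ G V) (hπ : ∀ g v, star (π g v) = π g (star v)) : π.HasRealForm := by
  have : Module.Finite ℝ V := .trans ℂ V
  have : Module.Finite ℝ (selfAdjoint V) :=
    .of_injective selfAdjoint.subtypeₗ Subtype.val_injective
  refine .of_equiv (π.onSelfAdjoint hπ)
    (.ofBijective _ bijective_liftBaseChange_selfAdjoint_subtypeₗ) fun g x => ?_
  induction x with
  | zero => simp
  | add x y hx hy => simp_all
  | tmul a w => simp [selfAdjoint.subtypeₗ, Representation.onSelfAdjoint]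

end RealForm

theorem orthogonal_rep_has_real_form
    {G : Type*} [Group G] [Finite G]
    {V : Type*} [AddCommGroup V] [Module ℂ V] [FiniteDimensional ℂ V]
    (π : Representation ℂ G V)
    (B : V →ₗ[ℂ] V →ₗ[ℂ] ℂ)
    (hsymm : ∀ v w, B v w = B w v)
    (hinv : ∀ (g : G) (v w : V), B (π g v) (π g w) = B v w)
    (hnondeg : ∀ v : V, (∀ w : V, B v w = 0) → v = 0) :
    ∃ (V₀ : Type) (_ : AddCommGroup V₀) (_ : Module ℝ V₀)
      (π₀ : Representation ℝ G V₀)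
      (e : (ℂ ⊗[ℝ] V₀) ≃ₗ[ℂ] V),
      ∀ (g : G) (x : ℂ ⊗[ℝ] V₀),
        e (LinearMap.baseChange ℂ (π₀ g) x) = π g (e x) := by
  obtain ⟨c, hc⟩ := π.exists_invariant_innerProductCore
  let : NormedAddCommGroup V := c.toNormedAddCommGroup
  let : InnerProductSpace ℂ V := .ofCore c.toCore
  obtain ⟨σ, hσσ, hσπ⟩ := π.exists_equivariant_conjLinear_involution hc B hsymm hinv hnondeg
  let : StarAddMonoid V := { star := σ, star_involutive := hσσ, star_add := map_add σ }
  have : StarModule ℂ V := ⟨map_smulₛₗ σ⟩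
  exact π.hasRealForm_of_star_comm hσπ
end

section
/- For q odd and any complex representation π of SL(2, F_q) admitting a nondegenerate invariant symmetric bilinear form, the integer Θ_π(I) - Θ_π(-I) is divisible by 8. -/
/-!
Since every element of a finite field is a sum of two squares, `-1 = a² + b²` in `F`, and
`x = !![0, 1; -1, 0]`, `y = !![a, b; b, -a]` satisfy `x² = y² = -1`, `xy = -yx` in `SL(2, F)`.
Let `W` be the `(-1)`-eigenspace of `π(-1)`; then `Θ(1) - Θ(-1) = 2 dim W`. The form `B` stays
nondegenerate on `W`, because `W` is `B`-orthogonal to the `(+1)`-eigenspace, and `π x`, `π y`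
act on `W` as anticommuting `B`-orthogonal complex structures. Hence `W` is the sum of the
`±i`-eigenspaces of `π x`, which `π y` exchanges, and `B (π y ·) ·` is a nondegenerate skew
form on the `i`-eigenspace. So that eigenspace has even dimension, and `4 ∣ dim W`.
-/

open Matrix

instance : Fact (Even (Fintype.card (Fin 2))) := ⟨by decide⟩

open Module LinearMap

theorem Matrix.det_eq_zero_of_transpose_eq_neg {n R : Type*} [Fintype n] [DecidableEq n]
    [CommRing R] [NoZeroDivisors R] [NeZero (2 : R)] {M : Matrix n n R} (hM : Mᵀ = -M)
    (hn : Odd (Fintype.card n)) : M.det = 0 := by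
  have h := det_transpose M
  rw [hM, det_neg, hn.neg_one_pow, neg_one_mul] at h
  have h2 : (2 : R) * M.det = 0 := by linear_combination -h
  exact (mul_eq_zero.mp h2).resolve_left two_ne_zero

theorem neg_one_ne_one {R : Type*} [CommRing R] [NeZero (2 : R)] : (-1 : R) ≠ 1 :=
  fun h ↦ two_ne_zero (α := R) (by linear_combination -h)

section

variable {K V : Type*} [Field K] [AddCommGroup V] [Module K V]

theorem LinearMap.BilinForm.even_finrank_of_separatingLeft_of_skew [NeZero (2 : K)]
    [FiniteDimensional K V] {S : LinearMap.BilinForm K V} (hS : S.SeparatingLeft)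
    (hskew : ∀ v w, S v w = -S w v) : Even (finrank K V) := by
  let b := finBasis K V
  have hM : (BilinForm.toMatrix b S)ᵀ = -BilinForm.toMatrix b S := by
    ext i j
    simp [BilinForm.toMatrix_apply, hskew (b j) (b i)]
  by_contra hodd
  have hodd' : Odd (Fintype.card (Fin (finrank K V))) := by
    simpa using Nat.not_even_iff_odd.mp hodd
  exact (BilinForm.nondegenerate_iff_det_ne_zero b).mp (.ofSeparatingLeft hS)
    (det_eq_zero_of_transpose_eq_neg hM hodd')

theorem Module.End.isCompl_eigenspace_eigenspace_neg [NeZero (2 : K)] {T : End K V} {s : K}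
    (hs : s ≠ 0) (hT : ∀ v, T (T v) = (s * s) • v) :
    IsCompl (T.eigenspace s) (T.eigenspace (-s)) := by
  have h2s : 2 * s ≠ 0 := mul_ne_zero two_ne_zero hs
  constructor
  · rw [Submodule.disjoint_def]
    intro v hv hv'
    rw [mem_eigenspace_iff] at hv hv'
    have : (2 * s) • v = 0 := by linear_combination (norm := module) hv' - hv
    exact (smul_eq_zero.mp this).resolve_left h2s
  · rw [codisjoint_iff, Submodule.eq_top_iff']
    intro v
    have hdecomp : v = (2 * s)⁻¹ • (s • v + T v) + (2 * s)⁻¹ • (s • v - T v) := by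
      match_scalars <;> field_simp <;> ring
    rw [hdecomp]
    refine Submodule.add_mem_sup ?_ ?_ <;> rw [mem_eigenspace_iff] <;>
      simp only [map_smul, map_add, map_sub, hT] <;> match_scalars <;> ring

theorem LinearMap.IsOrthogonal.apply_eq_zero_of_mem_eigenspace {B : LinearMap.BilinForm K V}
    {T : End K V} (hT : B.IsOrthogonal T) {a b : K} (hab : a * b ≠ 1) {v w : V}
    (hv : v ∈ T.eigenspace a) (hw : w ∈ T.eigenspace b) : B v w = 0 := by
  have h := hT v w
  rw [End.mem_eigenspace_iff.mp hv, End.mem_eigenspace_iff.mp hw] at h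
  have h' : (a * b - 1) * B v w = 0 := by
    simp only [map_smul, smul_apply, smul_eq_mul] at h
    linear_combination h
  exact (mul_eq_zero.mp h').resolve_left (sub_ne_zero.mpr hab)

theorem LinearMap.SeparatingLeft.eq_zero_of_codisjoint {B : LinearMap.BilinForm K V}
    (hB : B.SeparatingLeft) {U U' : Submodule K V} (hUU' : Codisjoint U U') {v : V}
    (hU : ∀ u ∈ U, B v u = 0) (hU' : ∀ u ∈ U', B v u = 0) : v = 0 := by
  refine hB v fun w ↦ ?_
  have hw : w ∈ U ⊔ U' := hUU'.eq_top ▸ Submodule.mem_top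
  obtain ⟨u, hu, u', hu', rfl⟩ := Submodule.mem_sup.mp hw
  rw [map_add, hU u hu, hU' u' hu', add_zero]

theorem LinearMap.trace_eq_finrank_sub_two_mul_finrank_eigenspace_neg_one [NeZero (2 : K)]
    [FiniteDimensional K V] {T : End K V} (hT : ∀ v, T (T v) = v) :
    trace K V T = finrank K V - 2 * finrank K (T.eigenspace (-1)) := by
  let P : End K V := (2 : K)⁻¹ • (1 - T)
  have hP : IsProj (T.eigenspace (-1)) P := by
    constructor
    · intro v
      rw [End.mem_eigenspace_iff]
      simp only [P, smul_apply, sub_apply, map_smul, map_sub, hT]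
      module
    · intro v hv
      rw [End.mem_eigenspace_iff] at hv
      simp only [P, smul_apply, sub_apply, hv]
      match_scalars
      field_simp
      ring
  have hTP : T = 1 - (2 : K) • P := by
    simp only [P, smul_smul, mul_inv_cancel₀ (two_ne_zero' K), one_smul, sub_sub_cancel]
  rw [congrArg (trace K V) hTP, map_sub, map_smul, hP.trace, trace_one, smul_eq_mul]

theorem Module.End.mapsTo_eigenspace_neg_of_anticommute {A C : End K V}
    (hAC : ∀ v, A (C v) = -C (A v)) (a : K) :
    ∀ v ∈ A.eigenspace a, C v ∈ A.eigenspace (-a) := by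
  intro v hv
  rw [mem_eigenspace_iff] at hv ⊢
  rw [hAC, hv, map_smul, neg_smul]

theorem Module.End.finrank_eigenspace_neg_of_anticommute [FiniteDimensional K V] {A C : End K V}
    (hC : Function.Injective C) (hAC : ∀ v, A (C v) = -C (A v)) (a : K) :
    finrank K (A.eigenspace (-a)) = finrank K (A.eigenspace a) := by
  have hle : ∀ b : K, finrank K (A.eigenspace b) ≤ finrank K (A.eigenspace (-b)) := fun b ↦
    finrank_le_finrank_of_injective (f := C.restrict (mapsTo_eigenspace_neg_of_anticommute hAC b))
      fun v w h ↦ Subtype.ext (hC (congrArg Subtype.val h))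
  have hle' := hle (-a)
  rw [neg_neg] at hle'
  exact le_antisymm hle' (hle a)

theorem four_dvd_finrank_of_anticommuting_isOrthogonal [NeZero (2 : K)] [FiniteDimensional K V]
    {i : K} (hi : i * i = -1) {B : LinearMap.BilinForm K V} (hsymm : ∀ v w, B v w = B w v)
    (hB : B.SeparatingLeft) {A C : End K V} (hA : ∀ v, A (A v) = -v) (hC : ∀ v, C (C v) = -v)
    (hAC : ∀ v, A (C v) = -C (A v)) (hBA : B.IsOrthogonal A) (hBC : B.IsOrthogonal C) :
    4 ∣ finrank K V := by
  have hi0 : i ≠ 0 := by rintro rfl; simp at hi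
  have hcompl : IsCompl (A.eigenspace i) (A.eigenspace (-i)) :=
    End.isCompl_eigenspace_eigenspace_neg hi0 fun v ↦ by rw [hA, hi, neg_one_smul]
  have hC_swap := End.mapsTo_eigenspace_neg_of_anticommute hAC i
  have hC_inj : Function.Injective C := fun v w h ↦ by simpa [hC] using congrArg C h
  have hfinrank : finrank K V = 2 * finrank K (A.eigenspace i) := by
    rw [← Submodule.finrank_add_eq_of_isCompl hcompl, two_mul,
      End.finrank_eigenspace_neg_of_anticommute hC_inj hAC i]
  let S : LinearMap.BilinForm K (A.eigenspace i) :=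
    B.compl₁₂ (C ∘ₗ (A.eigenspace i).subtype) (A.eigenspace i).subtype
  have hS_skew : ∀ v w, S v w = -S w v := fun v w ↦ by
    simp only [S, compl₁₂_apply, coe_comp, Function.comp_apply, Submodule.coe_subtype]
    rw [← hBC, hC, map_neg, LinearMap.neg_apply, hsymm]
  have hS : S.SeparatingLeft := by
    intro v hv
    -- `C v` lies in the `(-i)`-eigenspace, which is `B`-orthogonal to itself as `(-i)² ≠ 1`.
    have hCv : C v = 0 := hB.eq_zero_of_codisjoint hcompl.codisjoint
      (fun u hu ↦ hv ⟨u, hu⟩)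
      (fun u hu ↦ hBA.apply_eq_zero_of_mem_eigenspace (by
          rw [neg_mul_neg, hi]; exact neg_one_ne_one)
        (hC_swap v v.2) hu)
    exact Subtype.ext (hC_inj (hCv.trans (map_zero C).symm))
  obtain ⟨k, hk⟩ := S.even_finrank_of_separatingLeft_of_skew hS hS_skew
  exact ⟨k, by omega⟩

theorem Representation.apply_apply_of_mul_self_eq_one {G : Type*} [Monoid G]
    (π : Representation K G V) {z : G} (hz : z * z = 1) (v : V) : π z (π z v) = v := by
  rw [← End.mul_apply, ← map_mul, hz, map_one, End.one_apply]

theorem LinearMap.SeparatingLeft.compl₁₂_eigenspace_neg_one [NeZero (2 : K)]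
    {B : LinearMap.BilinForm K V} (hB : B.SeparatingLeft) {T : End K V}
    (hT : ∀ v, T (T v) = v) (hBT : B.IsOrthogonal T) :
    (B.compl₁₂ (T.eigenspace (-1)).subtype (T.eigenspace (-1)).subtype).SeparatingLeft := by
  have hcompl : IsCompl (T.eigenspace 1) (T.eigenspace (-1)) :=
    End.isCompl_eigenspace_eigenspace_neg one_ne_zero fun v ↦ by rw [hT, one_mul, one_smul]
  intro v hv
  refine Subtype.ext <| hB.eq_zero_of_codisjoint hcompl.codisjoint.symm
    (fun u hu ↦ hv ⟨u, hu⟩) fun u hu ↦ hBT.apply_eq_zero_of_mem_eigenspace ?_ v.2 hu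
  rw [neg_one_mul]
  exact neg_one_ne_one

theorem Representation.four_dvd_finrank_eigenspace_neg_one [NeZero (2 : K)]
    [FiniteDimensional K V] {i : K} (hi : i * i = -1) {G : Type*} [Group G] {x y z : G}
    (hx : x * x = z) (hy : y * y = z) (hxy : x * y = z * (y * x)) (hz : z * z = 1)
    (π : Representation K G V) {B : LinearMap.BilinForm K V} (hsymm : ∀ v w, B v w = B w v)
    (hB : B.SeparatingLeft) (hπB : ∀ g, B.IsOrthogonal (π g)) :
    4 ∣ finrank K (End.eigenspace (π z) (-1)) := by
  set W := End.eigenspace (π z) (-1)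
  have hπ_mul : ∀ g h v, π g (π h v) = π (g * h) v := fun g h v ↦ by
    rw [map_mul, End.mul_apply]
  have hz_neg : ∀ v ∈ W, π z v = -v := fun v hv ↦ by
    rw [End.mem_eigenspace_iff.mp hv, neg_one_smul]
  have hmem : ∀ g, g * g = z → ∀ v ∈ W, π g v ∈ W := by
    intro g hg v hv
    rw [End.mem_eigenspace_iff, neg_one_smul, hπ_mul, ← hg, mul_assoc, ← hπ_mul, hg,
      hz_neg v hv, map_neg]
  have hsq : ∀ g (hg : g * g = z) (v : W),
      (π g).restrict (hmem g hg) ((π g).restrict (hmem g hg) v) = -v := fun g hg v ↦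
    Subtype.ext <| by simp only [coe_restrict_apply, hπ_mul, hg, hz_neg v v.2, Submodule.coe_neg]
  let A := (π x).restrict (hmem x hx)
  let C := (π y).restrict (hmem y hy)
  have hAC : ∀ v, A (C v) = -C (A v) := fun v ↦ Subtype.ext <| by
    simp only [A, C, coe_restrict_apply, Submodule.coe_neg]
    rw [hπ_mul, hxy, ← hπ_mul, ← hπ_mul y, hz_neg _ (hmem _ hy _ (hmem _ hx _ v.2))]
  exact four_dvd_finrank_of_anticommuting_isOrthogonal hi (fun v w ↦ hsymm v w)
    (hB.compl₁₂_eigenspace_neg_one (π.apply_apply_of_mul_self_eq_one hz) (hπB z))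
    (hsq x hx) (hsq y hy) hAC (fun v w ↦ hπB x v w) (fun v w ↦ hπB y v w)

end

theorem FiniteField.exists_sq_add_sq_eq_neg_one (F : Type*) [Field F] [Fintype F] :
    ∃ a b : F, a ^ 2 + b ^ 2 = -1 := by
  have : Fact (ringChar F).Prime := ⟨CharP.char_is_prime F (ringChar F)⟩
  have : NeZero (ringChar F) := ⟨this.out.ne_zero⟩
  obtain ⟨a, b, hab⟩ := CharP.sq_add_sq F (ringChar F) (-1)
  exact ⟨a, b, by exact_mod_cast hab⟩

theorem Matrix.SpecialLinearGroup.exists_quaternion_pair {F : Type*} [CommRing F] {a b : F}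
    (hab : a ^ 2 + b ^ 2 = -1) :
    ∃ x y : SpecialLinearGroup (Fin 2) F, x * x = -1 ∧ y * y = -1 ∧ x * y = -1 * (y * x) := by
  let x : SpecialLinearGroup (Fin 2) F := ⟨!![0, 1; -1, 0], by simp [det_fin_two_of]⟩
  let y : SpecialLinearGroup (Fin 2) F :=
    ⟨!![a, b; b, -a], by rw [det_fin_two_of]; linear_combination -hab⟩
  refine ⟨x, y, ?_, ?_, ?_⟩ <;> apply Subtype.ext <;>
    simp only [SpecialLinearGroup.coe_mul, SpecialLinearGroup.coe_neg, SpecialLinearGroup.coe_one,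
      neg_one_mul] <;>
    ext i j <;> fin_cases i <;> fin_cases j <;> simp [x, y, mul_apply] <;>
    first | ring1 | linear_combination hab

theorem orthogonal_character_difference_div_eight_general
    {F : Type*} [Field F] [Fintype F]
    {V : Type*} [AddCommGroup V] [Module ℂ V] [FiniteDimensional ℂ V]
    (π : Representation ℂ (SpecialLinearGroup (Fin 2) F) V)
    (B : V →ₗ[ℂ] V →ₗ[ℂ] ℂ)
    (hsymm : ∀ v w, B v w = B w v)
    (hinv : ∀ (g : SpecialLinearGroup (Fin 2) F) (v w : V), B (π g v) (π g w) = B v w)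
    (hnondeg : ∀ v : V, (∀ w : V, B v w = 0) → v = 0) :
    ∃ m : ℤ, LinearMap.trace ℂ V (π 1) - LinearMap.trace ℂ V (π (-1)) = (8 * m : ℤ) := by
  obtain ⟨a, b, hab⟩ := FiniteField.exists_sq_add_sq_eq_neg_one F
  obtain ⟨x, y, hx, hy, hxy⟩ := SpecialLinearGroup.exists_quaternion_pair hab
  have hz : (-1 : SpecialLinearGroup (Fin 2) F) * -1 = 1 := by rw [neg_mul_neg, one_mul]
  obtain ⟨k, hk⟩ :=
    π.four_dvd_finrank_eigenspace_neg_one Complex.I_mul_I hx hy hxy hz hsymm hnondeg hinv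
  refine ⟨k, ?_⟩
  rw [map_one, trace_one, trace_eq_finrank_sub_two_mul_finrank_eigenspace_neg_one
    (π.apply_apply_of_mul_self_eq_one hz), hk]
  push_cast
  ring

theorem orthogonal_character_difference_div_eight
    {F : Type*} [Field F] [Fintype F] (hq : Odd (Fintype.card F))
    {V : Type*} [AddCommGroup V] [Module ℂ V] [FiniteDimensional ℂ V]
    (π : Representation ℂ (SpecialLinearGroup (Fin 2) F) V)
    (B : V →ₗ[ℂ] V →ₗ[ℂ] ℂ)
    (hsymm : ∀ v w, B v w = B w v)
    (hinv : ∀ (g : SpecialLinearGroup (Fin 2) F) (v w : V), B (π g v) (π g w) = B v w)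
    (hnondeg : ∀ v : V, (∀ w : V, B v w = 0) → v = 0) :
    ∃ m : ℤ, LinearMap.trace ℂ V (π 1) - LinearMap.trace ℂ V (π (-1)) = (8 * m : ℤ) :=
  orthogonal_character_difference_div_eight_general π B hsymm hinv hnondeg
end

section
/- For q odd and n ≥ 1, the subgroup X of Sp(2n, F_q) consisting of symplectic matrices whose nonzero entries lie only on the diagonal or antidiagonal is isomorphic to the direct product of n copies of SL(2, F_q). -/
/-!
Pair each index `p < n` with its mirror image `2n - 1 - p`. Reindexing `Fin (2n)` as
`Fin 2 × Fin n` along this pairing turns the matrices supported on the diagonal and the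
antidiagonal into the block-diagonal matrices with `2 × 2` blocks, and turns the form `J` into
the block-diagonal matrix with blocks `±(0 1; -1 0)`. Since `Bᵀ (0 1; -1 0) B = det B • (0 1; -1 0)`
for every `2 × 2` matrix `B`, such a block-diagonal matrix preserves `J` exactly when each of its
blocks lies in `SL(2)`.
-/

open Matrix

def mirrorEquiv (n : ℕ) : Fin 2 × Fin n ≃ Fin (2 * n) :=
  (finTwoEquiv.prodCongr (Equiv.refl _)).trans <| (Equiv.boolProdEquivSum _).trans <|
    ((Equiv.refl _).sumCongr Fin.revPerm).trans <| finSumFinEquiv.trans (finCongr (two_mul n).symm)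

section MirrorEquiv

variable {n : ℕ}

@[simp]
lemma mirrorEquiv_zero_val (p : Fin n) : (mirrorEquiv n (0, p) : ℕ) = p := by
  simp [mirrorEquiv, show finTwoEquiv 0 = false from rfl]

@[simp]
lemma mirrorEquiv_one_val (p : Fin n) : (mirrorEquiv n (1, p) : ℕ) = 2 * n - 1 - p := by
  simp [mirrorEquiv, show finTwoEquiv 1 = true from rfl, Fin.rev]
  omega

lemma mirrorEquiv_eq_or_add_eq_iff {r s : Fin 2} {p p' : Fin n} :
    (mirrorEquiv n (r, p) = mirrorEquiv n (s, p') ∨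
      (mirrorEquiv n (r, p) : ℕ) + mirrorEquiv n (s, p') = 2 * n - 1) ↔ p = p' := by
  rw [Fin.ext_iff, Fin.ext_iff]
  have := p.isLt
  have := p'.isLt
  fin_cases r <;> fin_cases s <;> simp <;> omega

end MirrorEquiv

def mirrorBlockDiagonal (R : Type*) [NonAssocSemiring R] (n : ℕ) :
    (Fin n → Matrix (Fin 2) (Fin 2) R) →+* Matrix (Fin (2 * n)) (Fin (2 * n)) R :=
  (reindexRingEquiv R (mirrorEquiv n)).toRingHom.comp (blockDiagonalRingHom (Fin 2) (Fin n) R)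

section MirrorBlockDiagonal

variable {R : Type*} [NonAssocSemiring R] {n : ℕ}

lemma mirrorBlockDiagonal_apply_mirrorEquiv (B : Fin n → Matrix (Fin 2) (Fin 2) R)
    (r s : Fin 2) (p p' : Fin n) :
    mirrorBlockDiagonal R n B (mirrorEquiv n (r, p)) (mirrorEquiv n (s, p')) =
      if p = p' then B p r s else 0 := by
  simp [mirrorBlockDiagonal, blockDiagonal_apply]

lemma mirrorBlockDiagonal_injective : Function.Injective (mirrorBlockDiagonal R n) :=
  (reindexRingEquiv R (mirrorEquiv n)).injective.comp blockDiagonal_injective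

lemma mirrorBlockDiagonal_transpose (B : Fin n → Matrix (Fin 2) (Fin 2) R) :
    (mirrorBlockDiagonal R n B)ᵀ = mirrorBlockDiagonal R n fun p => (B p)ᵀ := by
  simp [mirrorBlockDiagonal, blockDiagonal_transpose]

lemma exists_mirrorBlockDiagonal_eq_iff (A : Matrix (Fin (2 * n)) (Fin (2 * n)) R) :
    (∃ B, mirrorBlockDiagonal R n B = A) ↔
      ∀ i j, A i j ≠ 0 → i = j ∨ (i : ℕ) + j = 2 * n - 1 := by
  refine ⟨?_, fun hA => ⟨blockDiag (reindex (mirrorEquiv n).symm (mirrorEquiv n).symm A), ?_⟩⟩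
  · rintro ⟨B, rfl⟩ i j hij
    obtain ⟨⟨r, p⟩, rfl⟩ := (mirrorEquiv n).surjective i
    obtain ⟨⟨s, p'⟩, rfl⟩ := (mirrorEquiv n).surjective j
    rw [mirrorBlockDiagonal_apply_mirrorEquiv] at hij
    exact mirrorEquiv_eq_or_add_eq_iff.mpr (of_not_not fun h => hij (if_neg h))
  · ext i j
    obtain ⟨⟨r, p⟩, rfl⟩ := (mirrorEquiv n).surjective i
    obtain ⟨⟨s, p'⟩, rfl⟩ := (mirrorEquiv n).surjective j
    rw [mirrorBlockDiagonal_apply_mirrorEquiv]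
    split_ifs with h
    · subst h; rfl
    · exact (not_imp_comm.mp (hA _ _) (mt mirrorEquiv_eq_or_add_eq_iff.mp h)).symm

end MirrorBlockDiagonal

section SymplecticForm

variable {R : Type*} [CommRing R]

lemma transpose_mul_symplecticForm_mul_self (B : Matrix (Fin 2) (Fin 2) R) :
    Bᵀ * !![0, 1; -1, 0] * B = B.det • !![0, 1; -1, 0] := by
  ext i j
  fin_cases i <;> fin_cases j <;> simp [mul_apply, Fin.sum_univ_two, det_fin_two] <;> ring

lemma transpose_mul_smul_symplecticForm_mul_self_eq_iff (B : Matrix (Fin 2) (Fin 2) R) {c : R}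
    (hc : IsUnit c) :
    Bᵀ * (c • !![0, 1; -1, 0]) * B = c • !![0, 1; -1, 0] ↔ B.det = 1 := by
  rw [Matrix.mul_smul, Matrix.smul_mul, transpose_mul_symplecticForm_mul_self, smul_smul]
  refine ⟨fun h => hc.mul_eq_left.mp ?_, fun h => by rw [h, mul_one]⟩
  simpa using congrFun (congrFun h 0) 1

end SymplecticForm

lemma neg_one_pow_two_mul_sub_one_sub {R : Type*} [Monoid R] [HasDistribNeg R] {n p : ℕ}
    (hp : p < n) : (-1 : R) ^ (2 * n - 1 - p) = -(-1) ^ p := by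
  rcases Nat.even_or_odd p with ⟨k, hk⟩ | ⟨k, hk⟩
  · rw [Odd.neg_one_pow ⟨n - 1 - k, by omega⟩, Even.neg_one_pow ⟨k, hk⟩]
  · rw [Even.neg_one_pow ⟨n - 1 - k, by omega⟩, Odd.neg_one_pow ⟨k, hk⟩, neg_neg]

def antidiagonalSymplecticForm (R : Type*) [Ring R] (n : ℕ) : Matrix (Fin (2 * n)) (Fin (2 * n)) R :=
  of fun i j => if (i : ℕ) + j = 2 * n - 1 then (-1) ^ (i : ℕ) else 0

lemma antidiagonalSymplecticForm_eq_mirrorBlockDiagonal {R : Type*} [Ring R] (n : ℕ) :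
    antidiagonalSymplecticForm R n =
      mirrorBlockDiagonal R n fun p => (-1 : R) ^ (p : ℕ) • !![0, 1; -1, 0] := by
  ext i j
  obtain ⟨⟨r, p⟩, rfl⟩ := (mirrorEquiv n).surjective i
  obtain ⟨⟨s, p'⟩, rfl⟩ := (mirrorEquiv n).surjective j
  rw [mirrorBlockDiagonal_apply_mirrorEquiv, antidiagonalSymplecticForm, of_apply]
  have := p.isLt
  have := p'.isLt
  fin_cases r <;> fin_cases s <;> simp [Fin.ext_iff]
  · omega
  · exact if_congr (by omega) rfl rfl
  · rw [neg_one_pow_two_mul_sub_one_sub p.isLt]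
    exact if_congr (by omega) rfl rfl
  · omega

section

variable {R : Type*} [CommRing R] {n : ℕ}

lemma mirrorBlockDiagonal_symplectic_iff (B : Fin n → Matrix (Fin 2) (Fin 2) R) :
    (mirrorBlockDiagonal R n B)ᵀ * antidiagonalSymplecticForm R n * mirrorBlockDiagonal R n B =
      antidiagonalSymplecticForm R n ↔ ∀ p, (B p).det = 1 := by
  rw [antidiagonalSymplecticForm_eq_mirrorBlockDiagonal, mirrorBlockDiagonal_transpose,
    ← map_mul, ← map_mul, mirrorBlockDiagonal_injective.eq_iff, funext_iff]
  exact forall_congr' fun _ =>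
    transpose_mul_smul_symplecticForm_mul_self_eq_iff _ (isUnit_neg_one.pow _)

variable (R n)

def mirrorBlockDiagonalSL :
    (Fin n → SpecialLinearGroup (Fin 2) R) →* Matrix (Fin (2 * n)) (Fin (2 * n)) R :=
  (mirrorBlockDiagonal R n : _ →* _).comp (SpecialLinearGroup.coeMonoidHom.compLeft (Fin n))

lemma mirrorBlockDiagonalSL_injective : Function.Injective (mirrorBlockDiagonalSL R n) :=
  mirrorBlockDiagonal_injective.comp SpecialLinearGroup.coeMonoidHom_injective.comp_left

lemma coe_mrange_mirrorBlockDiagonalSL :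
    (MonoidHom.mrange (mirrorBlockDiagonalSL R n) : Set (Matrix (Fin (2 * n)) (Fin (2 * n)) R)) =
      {A | Aᵀ * antidiagonalSymplecticForm R n * A = antidiagonalSymplecticForm R n ∧
        ∀ i j : Fin (2 * n), A i j ≠ 0 → i = j ∨ (i : ℕ) + (j : ℕ) = 2 * n - 1} := by
  ext A
  simp only [MonoidHom.coe_mrange, Set.mem_range, Set.mem_ofPred_eq]
  constructor
  · rintro ⟨g, rfl⟩
    exact ⟨(mirrorBlockDiagonal_symplectic_iff _).mpr fun p => (g p).2,
      (exists_mirrorBlockDiagonal_eq_iff _).mp ⟨_, rfl⟩⟩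
  · rintro ⟨hsymp, hpat⟩
    obtain ⟨B, rfl⟩ := (exists_mirrorBlockDiagonal_eq_iff A).mpr hpat
    exact ⟨fun p => ⟨B p, (mirrorBlockDiagonal_symplectic_iff B).mp hsymp p⟩, rfl⟩

end

theorem antidiagonal_symplectic_subgroup_iso_general
    {F : Type*} [Field F]
    (n : ℕ)
    (J : Matrix (Fin (2 * n)) (Fin (2 * n)) F)
    (hJ : ∀ i j : Fin (2 * n),
      J i j = if (i : ℕ) + (j : ℕ) = 2 * n - 1 then (-1 : F) ^ (i : ℕ) else 0) :
    ∃ X : Submonoid (Matrix (Fin (2 * n)) (Fin (2 * n)) F),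
      (X : Set (Matrix (Fin (2 * n)) (Fin (2 * n)) F)) =
        {A | Aᵀ * J * A = J ∧
          ∀ i j : Fin (2 * n), A i j ≠ 0 → i = j ∨ (i : ℕ) + (j : ℕ) = 2 * n - 1} ∧
      Nonempty (X ≃* (Fin n → SpecialLinearGroup (Fin 2) F)) := by
  obtain rfl : J = antidiagonalSymplecticForm F n := Matrix.ext hJ
  exact ⟨_, coe_mrange_mirrorBlockDiagonalSL F n,
    ⟨(MulEquiv.ofLeftInverse' _
      (Function.leftInverse_invFun (mirrorBlockDiagonalSL_injective F n))).symm⟩⟩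

theorem antidiagonal_symplectic_subgroup_iso
    {F : Type*} [Field F] [Fintype F] (hq : Odd (Fintype.card F))
    (n : ℕ) (hn : 1 ≤ n)
    (J : Matrix (Fin (2 * n)) (Fin (2 * n)) F)
    (hJ : ∀ i j : Fin (2 * n),
      J i j = if (i : ℕ) + (j : ℕ) = 2 * n - 1 then (-1 : F) ^ (i : ℕ) else 0) :
    ∃ X : Submonoid (Matrix (Fin (2 * n)) (Fin (2 * n)) F),
      (X : Set (Matrix (Fin (2 * n)) (Fin (2 * n)) F)) =
        {A | Aᵀ * J * A = J ∧
          ∀ i j : Fin (2 * n), A i j ≠ 0 → i = j ∨ (i : ℕ) + (j : ℕ) = 2 * n - 1} ∧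
      Nonempty (X ≃* (Fin n → SpecialLinearGroup (Fin 2) F)) :=
  antidiagonal_symplectic_subgroup_iso_general n J hJ
end

section
/- For q = 2^r even and π a complex representation of SL(2, F_q), the quantity s_π = (Θ_π(1) - Θ_π(n₁))/q is an integer, where n₁ = [[1,1],[0,1]]. -/
/-!
The transvections `!![1, b; 0, 1]` form a subgroup `N ≅ (F, +)` of order `q`. In characteristic 2
every `b ≠ 0` is a square `a ^ 2`, and conjugation by `diag(a, a⁻¹)` carries `n₁` to
`!![1, b; 0, 1]`; so `Θ_π` is constant on `N \ {1}`, and averaging over `N` gives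
`Θ_π(1) + (q - 1) Θ_π(n₁) = q · dim V^N`. Since `n₁ ^ 2 = 1`, the trace `Θ_π(n₁)` is
the difference of the dimensions of the `±1`-eigenspaces, an integer, and
`Θ_π(1) - Θ_π(n₁) = q (dim V^N - Θ_π(n₁))`.
-/

open Matrix

theorem LinearMap.exists_trace_eq_intCast_of_mul_self_eq_one {K V : Type*} [Field K]
    [AddCommGroup V] [Module K V] [FiniteDimensional K V] (h2 : (2 : K) ≠ 0)
    (u : V →ₗ[K] V) (hu : u * u = 1) : ∃ m : ℤ, LinearMap.trace K V u = m := by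
  have hsq : (1 + u) * (1 + u) = (2 : K) • (1 + u) := by
    simp only [mul_add, add_mul, one_mul, mul_one, hu]
    module
  have he : IsIdempotentElem ((2⁻¹ : K) • (1 + u)) := by
    rw [IsIdempotentElem, smul_mul_smul_comm, hsq, smul_smul]
    congr 1
    field_simp
  obtain ⟨p, hp⟩ := (LinearMap.isProj_iff_isIdempotentElem _).mpr he
  have htrace : LinearMap.trace K V u = 2 * Module.finrank K p - Module.finrank K V := by
    rw [← hp.trace, map_smul, map_add, LinearMap.trace_one, smul_eq_mul]
    field_simp
    ring
  exact ⟨2 * Module.finrank K p - Module.finrank K V, by rw [htrace]; push_cast; ring⟩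

namespace Representation

variable {G k V : Type*} [Group G] [Field k] [AddCommGroup V] [Module k V]
  (ρ : Representation k G V)

theorem character_eq_of_isConj {g g' : G} (h : IsConj g g') :
    ρ.character g = ρ.character g' := by
  obtain ⟨c, rfl⟩ := isConj_iff.mp h
  exact (ρ.char_conj g c).symm

theorem sum_character_eq_card_mul_finrank [FiniteDimensional k V] [Fintype G] [CharZero k] :
    ∑ g : G, ρ.character g = Nat.card G * Module.finrank k ρ.invariants := by
  have hG : (Nat.card G : k) ≠ 0 := Nat.cast_ne_zero.mpr Nat.card_pos.ne'
  let := invertibleOfNonzero hG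
  rw [← ρ.card_inv_mul_sum_char_eq_finrank, mul_inv_cancel_left₀ hG]

end Representation

namespace Matrix.SpecialLinearGroup

def transvectionHom {ι R : Type*} [Fintype ι] [DecidableEq ι] [CommRing R] {i j : ι}
    (hij : i ≠ j) : Multiplicative R →* SpecialLinearGroup ι R where
  toFun b := transvection hij b.toAdd
  map_one' := transvection_coeff_zero hij
  map_mul' a b := transvection_add hij a.toAdd b.toAdd

lemma transvection_zero_one_coe {R : Type*} [CommRing R] (b : R) :
    (transvection (zero_ne_one' (Fin 2)) b : Matrix (Fin 2) (Fin 2) R) = !![1, b; 0, 1] := by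
  ext i j
  fin_cases i <;> fin_cases j <;> simp [transvection_coe]

variable {F : Type*} [Field F]

lemma diag2_mul_transvection_mul_inv {a : F} (ha : a ≠ 0) (b : F) :
    diag2 a ha * transvection (zero_ne_one' (Fin 2)) b * (diag2 a ha)⁻¹ =
      transvection (zero_ne_one' (Fin 2)) (a ^ 2 * b) := by
  ext : 1
  simp [diag2_inv, transvection_zero_one_coe, diag2_coe', ha, sq, mul_assoc, mul_comm b a]

lemma isConj_transvection_one [Fintype F] (hF : ringChar F = 2) {b : F} (hb : b ≠ 0) :
    IsConj (transvection (zero_ne_one' (Fin 2)) 1) (transvection (zero_ne_one' (Fin 2)) b) := by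
  obtain ⟨a, rfl⟩ := FiniteField.isSquare_of_char_two hF b
  have ha : a ≠ 0 := by rintro rfl; simp at hb
  exact isConj_iff.mpr ⟨diag2 a ha, by rw [diag2_mul_transvection_mul_inv, sq, mul_one]⟩

theorem sum_character_transvection [Fintype F] (hF : ringChar F = 2) {k V : Type*} [Field k]
    [AddCommGroup V] [Module k V] [FiniteDimensional k V]
    (π : Representation k (SpecialLinearGroup (Fin 2) F) V) :
    ∑ b : F, π.character (transvection (zero_ne_one' (Fin 2)) b) =
      π.character 1 +
        (Fintype.card F - 1 : k) * π.character (transvection (zero_ne_one' (Fin 2)) 1) := by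
  classical
  have hconj (b : F) (hb : b ∈ ({0} : Finset F)ᶜ) :
      π.character (transvection (zero_ne_one' (Fin 2)) b) =
        π.character (transvection (zero_ne_one' (Fin 2)) 1) :=
    (π.character_eq_of_isConj (isConj_transvection_one hF (by simpa using hb))).symm
  rw [Fintype.sum_eq_add_sum_compl 0, transvection_coeff_zero, Finset.sum_congr rfl hconj,
    Finset.sum_const, Finset.card_compl, Finset.card_singleton, nsmul_eq_mul,
    Nat.cast_sub Fintype.card_pos, Nat.cast_one]

end Matrix.SpecialLinearGroup

open Matrix.SpecialLinearGroup in
theorem sl2_even_char_s_pi_integral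
    {F : Type*} [Field F] [Fintype F]
    (hq : ∃ r : ℕ, 1 ≤ r ∧ Fintype.card F = 2 ^ r)
    {V : Type*} [AddCommGroup V] [Module ℂ V] [FiniteDimensional ℂ V]
    (π : Representation ℂ (SpecialLinearGroup (Fin 2) F) V)
    (n₁ : SpecialLinearGroup (Fin 2) F)
    (hn₁ : (n₁ : Matrix (Fin 2) (Fin 2) F) = !![1, 1; 0, 1]) :
    ∃ m : ℤ,
      LinearMap.trace ℂ V (π 1) - LinearMap.trace ℂ V (π n₁)
        = (Fintype.card F : ℂ) * (m : ℂ) := by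
  obtain ⟨r, hr, hcard⟩ := hq
  have hF : ringChar F = 2 := FiniteField.even_card_iff_char_two.mpr <|
    hcard ▸ Nat.mod_eq_zero_of_dvd (dvd_pow_self 2 (by omega))
  have hn₁' : transvection (zero_ne_one' (Fin 2)) 1 = n₁ := by
    ext : 1
    rw [hn₁, transvection_zero_one_coe]
  have hinv : n₁ * n₁ = 1 := by
    have := ringChar.of_eq hF
    rw [← hn₁', ← transvection_add, CharTwo.add_self_eq_zero, transvection_coeff_zero]
  obtain ⟨m, hm⟩ := LinearMap.exists_trace_eq_intCast_of_mul_self_eq_one two_ne_zero (π n₁)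
    (by rw [← map_mul, hinv, map_one])
  let ρ : Representation ℂ (Multiplicative F) V :=
    π.comp (transvectionHom (zero_ne_one' (Fin 2)))
  have hρ :
      ∑ g, ρ.character g = ∑ b : F, π.character (transvection (zero_ne_one' (Fin 2)) b) :=
    Fintype.sum_equiv Multiplicative.toAdd _ _ fun _ => rfl
  have hsum := ρ.sum_character_eq_card_mul_finrank
  rw [hρ, sum_character_transvection hF, hn₁', Nat.card_eq_fintype_card,
    Fintype.card_multiplicative] at hsum
  refine ⟨Module.finrank ℂ ρ.invariants - m, ?_⟩
  simp only [Representation.character] at hsum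
  push_cast
  linear_combination hsum - Fintype.card F * hm
end
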